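/- arXiv:2111.11314 — 4 statements merged into one kernel-verified Lean document; each statement's English description precedes it below -/
import Mathlib

section
/- For every 0 ≤ t ≤ T and every k ∈ Fin K, the forward value satisfies α t k = Σ over all prefix paths z : Fin (t+1) → Fin K with z t = k of π (z 0) · ∏_{s=1}^{t} φ s (z (s−1)) (z s) · e s (z s). -/
open Finset

namespace ForwardAlgorithm

variable {σ R : Type*} [Fintype σ] [DecidableEq σ] [CommSemiring R]

/-- `w s` weighs the step from position `s - 1` to position `s` of a path `z 0, …, z t`. -/
def prefixPathSum (init : σ → R) (w : ℕ → σ → σ → R) (t : ℕ) (k : σ) : R :=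
  ∑ z ∈ univ.filter (fun z : Fin (t + 1) → σ => z (Fin.last t) = k),
    init (z 0) * ∏ s : Fin t, w (s + 1) (z s.castSucc) (z s.succ)

theorem prefixPathSum_zero (init : σ → R) (w : ℕ → σ → σ → R) (k : σ) :
    prefixPathSum init w 0 k = init k := by
  have hsingle : univ.filter (fun z : Fin 1 → σ => z (Fin.last 0) = k) = {fun _ => k} := by
    ext z
    simp [funext_iff, Fin.forall_fin_one]
  rw [prefixPathSum, hsingle, sum_singleton]
  simp

theorem prefixPathSum_succ (init : σ → R) (w : ℕ → σ → σ → R) (t : ℕ) (k : σ) :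
    prefixPathSum init w (t + 1) k = ∑ k', prefixPathSum init w t k' * w (t + 1) k' k := by
  have hsplit : ∀ z : Fin (t + 1) → σ,
      let z' : Fin (t + 2) → σ := Fin.snoc z k
      init (z' 0) * ∏ s : Fin (t + 1), w (s + 1) (z' s.castSucc) (z' s.succ) =
        init (z 0) * (∏ s : Fin t, w (s + 1) (z s.castSucc) (z s.succ)) *
          w (t + 1) (z (Fin.last t)) k := by
    intro z
    dsimp only
    rw [Fin.prod_univ_castSucc, ← Fin.castSucc_zero, Fin.snoc_castSucc]
    simp only [Fin.snoc_castSucc, Fin.succ_castSucc, Fin.succ_last, Fin.snoc_last,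
      Fin.val_castSucc, Fin.val_last]
    ring
  -- Paths of length `t + 2` ending in `k` are the `Fin.snoc z k`; group them by `z`'s endpoint.
  calc prefixPathSum init w (t + 1) k
      = ∑ z : Fin (t + 1) → σ, init (z 0) * (∏ s : Fin t, w (s + 1) (z s.castSucc) (z s.succ)) *
          w (t + 1) (z (Fin.last t)) k := by
        rw [prefixPathSum, sum_filter, ← (Fin.snocEquiv fun _ => σ).sum_comp,
          Fintype.sum_prod_type, sum_comm]
        simp only [Fin.snocEquiv_apply, Fin.snoc_last, Fintype.sum_ite_eq', hsplit]
    _ = ∑ k', prefixPathSum init w t k' * w (t + 1) k' k := by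
        rw [← sum_fiberwise univ (fun z : Fin (t + 1) → σ => z (Fin.last t))]
        refine sum_congr rfl fun k' _ => ?_
        rw [prefixPathSum, sum_mul]
        exact sum_congr rfl fun z hz => by rw [(mem_filter.mp hz).2]

theorem eq_prefixPathSum_of_forward {init : σ → R} {w : ℕ → σ → σ → R} {α : ℕ → σ → R} {T : ℕ}
    (hα0 : ∀ k, α 0 k = init k)
    (hα : ∀ t < T, ∀ k, α (t + 1) k = ∑ k', α t k' * w (t + 1) k' k) :
    ∀ t ≤ T, ∀ k, α t k = prefixPathSum init w t k := by
  intro t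
  induction t with
  | zero => intro _ k; rw [hα0, prefixPathSum_zero]
  | succ t ih =>
    intro ht k
    rw [hα t ht, prefixPathSum_succ]
    exact sum_congr rfl fun k' _ => by rw [ih (t.le_succ.trans ht)]

end ForwardAlgorithm

open ForwardAlgorithm in
theorem stmt_2_general (K T : ℕ)
    (pi0 : Fin K → ℝ) (φ : ℕ → Fin K → Fin K → ℝ) (e : ℕ → Fin K → ℝ)
    (α : ℕ → Fin K → ℝ)
    (hα0 : ∀ k, α 0 k = pi0 k)
    (hαrec : ∀ t, 1 ≤ t → t ≤ T → ∀ k : Fin K,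
      α t k = e t k * ∑ k' : Fin K, φ t k' k * α (t - 1) k') :
    ∀ t, t ≤ T → ∀ k : Fin K,
      α t k = ∑ z ∈ Finset.univ.filter
          (fun z : Fin (t + 1) → Fin K => z (Fin.last t) = k),
        pi0 (z 0) *
          ∏ s : Fin t, φ (↑s + 1) (z s.castSucc) (z s.succ) * e (↑s + 1) (z s.succ) := by
  refine eq_prefixPathSum_of_forward (w := fun s k' k => φ s k' k * e s k) hα0 ?_
  intro t ht k
  rw [hαrec (t + 1) t.succ_pos ht k, Nat.add_sub_cancel, mul_sum]
  exact sum_congr rfl fun k' _ => by ring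

/-- the forward value `α t k` equals the sum over all prefix paths
ending in state `k` at position `t` of the product of initial, transition and
emission weights. -/
theorem stmt_2 (K T : ℕ) (hK : 1 ≤ K) (hT : 1 ≤ T)
    (pi0 : Fin K → ℝ) (φ : ℕ → Fin K → Fin K → ℝ) (e : ℕ → Fin K → ℝ)
    (hπ : ∀ k, 0 ≤ pi0 k)
    (hφ : ∀ t k' k, 0 ≤ φ t k' k)
    (he : ∀ t k, 0 ≤ e t k)
    (α : ℕ → Fin K → ℝ)
    (hα0 : ∀ k, α 0 k = pi0 k)
    (hαrec : ∀ t, 1 ≤ t → t ≤ T → ∀ k : Fin K,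
      α t k = e t k * ∑ k' : Fin K, φ t k' k * α (t - 1) k') :
    ∀ t, t ≤ T → ∀ k : Fin K,
      α t k = ∑ z ∈ Finset.univ.filter
          (fun z : Fin (t + 1) → Fin K => z (Fin.last t) = k),
        pi0 (z 0) *
          ∏ s : Fin t, φ (↑s + 1) (z s.castSucc) (z s.succ) * e (↑s + 1) (z s.succ) :=
  stmt_2_general K T pi0 φ e α hα0 hαrec
end

section
/- For every 0 ≤ t ≤ T and every k ∈ Fin K, the backward value satisfies β t k = Σ over all suffix state sequences (z_t, z_{t+1}, …, z_T) ∈ (Fin K)^{T−t+1} with z_t = k of ∏_{s=t+1}^{T} φ s (z_{s−1}) (z_s) · e s (z_s), where the empty product (case t = T) equals 1. -/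
open Finset

section PathSum

variable {α R : Type*} [Fintype α] [CommSemiring R]

theorem Fin.sum_pi_succ {M : Type*} [AddCommMonoid M] {n : ℕ} (F : (Fin (n + 1) → α) → M) :
    ∑ z, F z = ∑ a, ∑ y : Fin n → α, F (Fin.cons a y) := by
  rw [← (Fin.consEquiv fun _ => α).sum_comp, Fintype.sum_prod_type]
  rfl

variable [DecidableEq α]

theorem Fin.sum_filter_apply_zero_eq {M : Type*} [AddCommMonoid M] {n : ℕ} (k : α)
    (F : (Fin (n + 1) → α) → M) :
    ∑ z ∈ univ.filter (fun z : Fin (n + 1) → α => z 0 = k), F z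
      = ∑ y : Fin n → α, F (Fin.cons k y) := by
  rw [sum_filter, ← (Fin.consEquiv fun _ => α).sum_comp, Fintype.sum_prod_type]
  simp [Fin.consEquiv]

-- `z i` is the state at position `t + i`; the step into it is weighted by `f (t + i)`.
def pathSum (f : ℕ → α → α → R) (t n : ℕ) (k : α) : R :=
  ∑ z ∈ univ.filter (fun z : Fin (n + 1) → α => z 0 = k),
    ∏ s : Fin n, f (t + s + 1) (z s.castSucc) (z s.succ)

theorem pathSum_zero (f : ℕ → α → α → R) (t : ℕ) (k : α) : pathSum f t 0 k = 1 := by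
  rw [pathSum, Fin.sum_filter_apply_zero_eq]
  simp

theorem pathSum_succ (f : ℕ → α → α → R) (t n : ℕ) (k : α) :
    pathSum f t (n + 1) k = ∑ k', f (t + 1) k k' * pathSum f (t + 1) n k' := by
  simp only [pathSum, Fin.sum_filter_apply_zero_eq, Fin.sum_pi_succ (n := n), mul_sum,
    Fin.prod_univ_succ]
  simp [add_assoc, add_left_comm]

theorem eq_pathSum_of_backward (f : ℕ → α → α → R) {T : ℕ} (β : ℕ → α → R)
    (hβT : ∀ k, β T k = 1) (hβrec : ∀ t < T, ∀ k, β t k = ∑ k', f (t + 1) k k' * β (t + 1) k') :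
    ∀ t ≤ T, ∀ k, β t k = pathSum f t (T - t) k := by
  intro t ht
  induction h : T - t generalizing t with
  | zero => simp [show t = T by omega, hβT, pathSum_zero]
  | succ n ih =>
    intro k
    rw [hβrec t (by omega), pathSum_succ]
    exact sum_congr rfl fun k' _ => by rw [ih (t + 1) (by omega) (by omega)]

end PathSum

theorem stmt_3_general (K T : ℕ)
    (φ : ℕ → Fin K → Fin K → ℝ) (e : ℕ → Fin K → ℝ)
    (β : ℕ → Fin K → ℝ)
    (hβT : ∀ k, β T k = 1)
    (hβrec : ∀ t, t < T → ∀ k : Fin K,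
      β t k = ∑ k' : Fin K, φ (t + 1) k k' * e (t + 1) k' * β (t + 1) k') :
    ∀ t, t ≤ T → ∀ k : Fin K,
      β t k = ∑ z ∈ Finset.univ.filter
          (fun z : Fin (T - t + 1) → Fin K => z 0 = k),
        ∏ s : Fin (T - t),
          φ (t + ↑s + 1) (z s.castSucc) (z s.succ) * e (t + ↑s + 1) (z s.succ) :=
  eq_pathSum_of_backward (fun s k k' => φ s k k' * e s k') β hβT hβrec

/-- the backward value `β t k` equals the sum over all suffix state
sequences `(z_t, …, z_T)` starting in state `k` at position `t` of the product of
transition and emission weights (the empty product, for `t = T`, equals 1). -/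
theorem stmt_3 (K T : ℕ) (hK : 1 ≤ K) (hT : 1 ≤ T)
    (pi0 : Fin K → ℝ) (φ : ℕ → Fin K → Fin K → ℝ) (e : ℕ → Fin K → ℝ)
    (hπ : ∀ k, 0 ≤ pi0 k)
    (hφ : ∀ t k' k, 0 ≤ φ t k' k)
    (he : ∀ t k, 0 ≤ e t k)
    (β : ℕ → Fin K → ℝ)
    (hβT : ∀ k, β T k = 1)
    (hβrec : ∀ t, t < T → ∀ k : Fin K,
      β t k = ∑ k' : Fin K, φ (t + 1) k k' * e (t + 1) k' * β (t + 1) k') :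
    ∀ t, t ≤ T → ∀ k : Fin K,
      β t k = ∑ z ∈ Finset.univ.filter
          (fun z : Fin (T - t + 1) → Fin K => z 0 = k),
        ∏ s : Fin (T - t),
          φ (t + ↑s + 1) (z s.castSucc) (z s.succ) * e (t + ↑s + 1) (z s.succ) :=
  stmt_3_general K T φ e β hβT hβrec
end

section
/- For every 0 ≤ t ≤ T and every k ∈ Fin K, α t k · β t k = Σ over all paths z : Fin (T+1) → Fin K with z t = k of W(z). -/
open Finset Real

/-!
Unrolling the forward recursion shows that `∑ k, α u k * h k` is the sum over length-`u` paths of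
their weight times `h` of the endpoint. For `t ≤ u ≤ T`, the sum over length-`u` paths through `k`
at time `t` of the weight times `β u` of the endpoint does not depend on `u`: splitting off the last
step of a length-`(u + 1)` path, the backward recursion absorbs it into `β u`. At `u = t` this sum is
`α t k * β t k`, and at `u = T`, where `β T = 1`, it is the total weight of the paths through `k`.
-/

section PathWeight

variable {K : ℕ} (pi0 : Fin K → ℝ) (φ : ℕ → Fin K → Fin K → ℝ) (e : ℕ → Fin K → ℝ)

noncomputable def pathWeight (u : ℕ) (z : Fin (u + 1) → Fin K) : ℝ :=
  pi0 (z 0) * ∏ s : Fin u, φ (↑s + 1) (z s.castSucc) (z s.succ) * e (↑s + 1) (z s.succ)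

theorem pathWeight_snoc (u : ℕ) (x : Fin (u + 1) → Fin K) (a : Fin K) :
    pathWeight pi0 φ e (u + 1) (Fin.snoc x a) =
      pathWeight pi0 φ e u x * (φ (u + 1) (x (Fin.last u)) a * e (u + 1) a) := by
  simp only [pathWeight, Fin.prod_univ_castSucc, Fin.succ_castSucc, Fin.snoc_castSucc,
    Fin.val_castSucc, Fin.succ_last, Fin.snoc_last, Fin.val_last, mul_assoc]
  rw [show (0 : Fin (u + 2)) = Fin.castSucc 0 from rfl, Fin.snoc_castSucc]

theorem sum_mul_pathWeight_succ (u : ℕ) (G : (Fin (u + 1) → Fin K) → ℝ) (h : Fin K → ℝ) :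
    ∑ z : Fin (u + 2) → Fin K, G (Fin.init z) * pathWeight pi0 φ e (u + 1) z * h (z (Fin.last _)) =
      ∑ x : Fin (u + 1) → Fin K, G x * pathWeight pi0 φ e u x *
        ∑ a, φ (u + 1) (x (Fin.last u)) a * e (u + 1) a * h a := by
  have snocEquiv_eq (a : Fin K) (x : Fin (u + 1) → Fin K) :
      (Fin.snocEquiv fun _ => Fin K) (a, x) = Fin.snoc x a := rfl
  rw [← (Fin.snocEquiv fun _ => Fin K).sum_comp, Fintype.sum_prod_type_right]
  refine sum_congr rfl fun x _ => ?_
  simp only [snocEquiv_eq, Fin.init_snoc, Fin.snoc_last, pathWeight_snoc, mul_sum]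
  exact sum_congr rfl fun a _ => by ring

theorem sum_forward_mul_eq_sum_pathWeight {T : ℕ} (α : ℕ → Fin K → ℝ)
    (hα0 : ∀ k, α 0 k = pi0 k)
    (hαrec : ∀ t, 1 ≤ t → t ≤ T → ∀ k : Fin K,
      α t k = e t k * ∑ k' : Fin K, φ t k' k * α (t - 1) k') :
    ∀ u ≤ T, ∀ h : Fin K → ℝ,
      ∑ k, α u k * h k = ∑ z : Fin (u + 1) → Fin K, pathWeight pi0 φ e u z * h (z (Fin.last u)) := by
  intro u
  induction u with
  | zero =>
    intro _ h
    rw [← (Equiv.funUnique (Fin 1) (Fin K)).symm.sum_comp]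
    simp [pathWeight, hα0]
  | succ u ih =>
    intro hu h
    calc ∑ k, α (u + 1) k * h k
        = ∑ k', α u k' * ∑ a, φ (u + 1) k' a * e (u + 1) a * h a := by
          simp only [hαrec (u + 1) (by omega) hu, Nat.add_sub_cancel, mul_sum, sum_mul]
          rw [sum_comm]
          exact sum_congr rfl fun _ _ => sum_congr rfl fun _ _ => by ring
      _ = _ := by
          simpa only [one_mul, ih (by omega)] using
            (sum_mul_pathWeight_succ pi0 φ e u (fun _ => 1) h).symm

theorem sum_pathWeight_through_mul_backward {T : ℕ} (α β : ℕ → Fin K → ℝ)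
    (hα0 : ∀ k, α 0 k = pi0 k)
    (hαrec : ∀ t, 1 ≤ t → t ≤ T → ∀ k : Fin K,
      α t k = e t k * ∑ k' : Fin K, φ t k' k * α (t - 1) k')
    (hβrec : ∀ t, t < T → ∀ k : Fin K,
      β t k = ∑ k' : Fin K, φ (t + 1) k k' * e (t + 1) k' * β (t + 1) k')
    (t : ℕ) (k : Fin K) :
    ∀ u (htu : t ≤ u), u ≤ T →
      ∑ z : Fin (u + 1) → Fin K, (if z ⟨t, Nat.lt_succ_of_le htu⟩ = k then 1 else 0) *
        pathWeight pi0 φ e u z * β u (z (Fin.last u)) = α t k * β t k := by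
  intro u htu
  induction u, htu using Nat.le_induction with
  | base =>
    intro ht
    have hforward := sum_forward_mul_eq_sum_pathWeight pi0 φ e α hα0 hαrec t ht
      fun k' => if k' = k then β t k' else 0
    simp only [mul_ite, mul_zero, sum_ite_eq', mem_univ, if_true] at hforward
    rw [hforward]
    refine sum_congr rfl fun z _ => ?_
    split_ifs <;> simp_all [Fin.last]
  | succ u htu ih =>
    intro hu
    rw [← ih (by omega)]
    simp only [hβrec u (by omega)]
    -- `Fin.init z ⟨t, _⟩` and `z ⟨t, _⟩` agree definitionally.
    exact sum_mul_pathWeight_succ pi0 φ e u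
      (fun x => if x ⟨t, Nat.lt_succ_of_le htu⟩ = k then 1 else 0) (β (u + 1))

end PathWeight

theorem stmt_4_general (K T : ℕ)
    (pi0 : Fin K → ℝ) (φ : ℕ → Fin K → Fin K → ℝ) (e : ℕ → Fin K → ℝ)
    (α : ℕ → Fin K → ℝ)
    (hα0 : ∀ k, α 0 k = pi0 k)
    (hαrec : ∀ t, 1 ≤ t → t ≤ T → ∀ k : Fin K,
      α t k = e t k * ∑ k' : Fin K, φ t k' k * α (t - 1) k')
    (β : ℕ → Fin K → ℝ)
    (hβT : ∀ k, β T k = 1)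
    (hβrec : ∀ t, t < T → ∀ k : Fin K,
      β t k = ∑ k' : Fin K, φ (t + 1) k k' * e (t + 1) k' * β (t + 1) k') :
    ∀ t, ∀ ht : t ≤ T, ∀ k : Fin K,
      α t k * β t k = ∑ z ∈ Finset.univ.filter
          (fun z : Fin (T + 1) → Fin K => z ⟨t, Nat.lt_succ_of_le ht⟩ = k),
        pi0 (z 0) *
          ∏ s : Fin T, φ (↑s + 1) (z s.castSucc) (z s.succ) * e (↑s + 1) (z s.succ) := by
  intro t ht k
  rw [← sum_pathWeight_through_mul_backward pi0 φ e α β hα0 hαrec hβrec t k T ht le_rfl,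
    sum_filter]
  simp only [hβT, mul_one, ite_mul, one_mul, zero_mul, pathWeight]

/-- `α t k · β t k` equals the total weight of all paths passing
through state `k` at position `t`. -/
theorem stmt_4 (K T : ℕ) (hK : 1 ≤ K) (hT : 1 ≤ T)
    (pi0 : Fin K → ℝ) (φ : ℕ → Fin K → Fin K → ℝ) (e : ℕ → Fin K → ℝ)
    (hπ : ∀ k, 0 ≤ pi0 k)
    (hφ : ∀ t k' k, 0 ≤ φ t k' k)
    (he : ∀ t k, 0 ≤ e t k)
    (α : ℕ → Fin K → ℝ)
    (hα0 : ∀ k, α 0 k = pi0 k)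
    (hαrec : ∀ t, 1 ≤ t → t ≤ T → ∀ k : Fin K,
      α t k = e t k * ∑ k' : Fin K, φ t k' k * α (t - 1) k')
    (β : ℕ → Fin K → ℝ)
    (hβT : ∀ k, β T k = 1)
    (hβrec : ∀ t, t < T → ∀ k : Fin K,
      β t k = ∑ k' : Fin K, φ (t + 1) k k' * e (t + 1) k' * β (t + 1) k') :
    ∀ t, ∀ ht : t ≤ T, ∀ k : Fin K,
      α t k * β t k = ∑ z ∈ Finset.univ.filter
          (fun z : Fin (T + 1) → Fin K => z ⟨t, Nat.lt_succ_of_le ht⟩ = k),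
        pi0 (z 0) *
          ∏ s : Fin T, φ (↑s + 1) (z s.castSucc) (z s.succ) * e (↑s + 1) (z s.succ) :=
  stmt_4_general K T pi0 φ e α hα0 hαrec β hβT hβrec
end

section
/- The total likelihood equals the sum of the final forward values: Σ_{k ∈ Fin K} α T k = Σ over all paths z : Fin (T+1) → Fin K of W(z). -/
/-!
By induction on `t`, `α t k` is the total weight of the paths of length `t` ending in state `k`:
a path of length `t + 1` ending in `k` is a path of length `t` extended by `k`, and extending a
path ending in `k'` multiplies its weight by `φ (t + 1) k' k * e (t + 1) k`, which is exactly the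
forward recursion. Summing over the final state `k` gives the total weight of all paths.
-/

open Finset Real

namespace HMM

variable {σ R : Type*} [CommSemiring R]

theorem sum_filter_last_eq_sum_snoc [Fintype σ] [DecidableEq σ] {n : ℕ}
    (f : (Fin (n + 1) → σ) → R) (k : σ) :
    ∑ z : Fin (n + 1) → σ with z (Fin.last n) = k, f z = ∑ z : Fin n → σ, f (Fin.snoc z k) := by
  rw [sum_filter, ← Fintype.sum_equiv (Fin.snocEquiv fun _ ↦ σ) _ _ (fun _ ↦ rfl),
    Fintype.sum_prod_type_right]
  simp [Fin.snocEquiv]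

variable (init : σ → R) (φ : ℕ → σ → σ → R) (e : ℕ → σ → R)

def pathWeight (t : ℕ) (z : Fin (t + 1) → σ) : R :=
  init (z 0) * ∏ s : Fin t, φ (↑s + 1) (z s.castSucc) (z s.succ) * e (↑s + 1) (z s.succ)

theorem pathWeight_snoc (t : ℕ) (z : Fin (t + 1) → σ) (k : σ) :
    pathWeight init φ e (t + 1) (Fin.snoc z k) =
      pathWeight init φ e t z * (φ (t + 1) (z (Fin.last t)) k * e (t + 1) k) := by
  simp only [pathWeight, Fin.prod_univ_castSucc, Fin.succ_castSucc, Fin.snoc_castSucc,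
    Fin.val_castSucc, Fin.succ_last, Fin.snoc_last, Fin.val_last]
  rw [← Fin.castSucc_zero, Fin.snoc_castSucc, mul_assoc]

variable [Fintype σ] [DecidableEq σ]

theorem sum_pathWeight_last_zero (k : σ) :
    ∑ z : Fin 1 → σ with z (Fin.last 0) = k, pathWeight init φ e 0 z = init k := by
  rw [sum_filter_last_eq_sum_snoc]
  simp [pathWeight, Fin.snoc]

theorem sum_pathWeight_last_succ (t : ℕ) (k : σ) :
    ∑ z : Fin (t + 2) → σ with z (Fin.last (t + 1)) = k, pathWeight init φ e (t + 1) z =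
      e (t + 1) k * ∑ k', φ (t + 1) k' k *
        ∑ z : Fin (t + 1) → σ with z (Fin.last t) = k', pathWeight init φ e t z := by
  rw [sum_filter_last_eq_sum_snoc]
  simp_rw [pathWeight_snoc, mul_sum]
  rw [← sum_fiberwise univ (fun z : Fin (t + 1) → σ ↦ z (Fin.last t))]
  refine sum_congr rfl fun k' _ ↦ sum_congr rfl fun z hz ↦ ?_
  rw [(mem_filter.1 hz).2]
  ring

theorem forward_eq_sum_pathWeight_last (T : ℕ) (α : ℕ → σ → R) (hα0 : ∀ k, α 0 k = init k)
    (hαrec : ∀ t, 1 ≤ t → t ≤ T → ∀ k, α t k = e t k * ∑ k', φ t k' k * α (t - 1) k') :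
    ∀ t ≤ T, ∀ k, α t k = ∑ z : Fin (t + 1) → σ with z (Fin.last t) = k, pathWeight init φ e t z
  | 0, _, k => by rw [hα0, sum_pathWeight_last_zero]
  | t + 1, ht, k => by
    rw [hαrec (t + 1) t.succ_pos ht, sum_pathWeight_last_succ, Nat.add_sub_cancel]
    simp_rw [forward_eq_sum_pathWeight_last T α hα0 hαrec t (by omega)]

end HMM

theorem stmt_5_general (K T : ℕ)
    (pi0 : Fin K → ℝ) (φ : ℕ → Fin K → Fin K → ℝ) (e : ℕ → Fin K → ℝ)
    (α : ℕ → Fin K → ℝ)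
    (hα0 : ∀ k, α 0 k = pi0 k)
    (hαrec : ∀ t, 1 ≤ t → t ≤ T → ∀ k : Fin K,
      α t k = e t k * ∑ k' : Fin K, φ t k' k * α (t - 1) k') :
    ∑ k : Fin K, α T k
      = ∑ z : Fin (T + 1) → Fin K,
          pi0 (z 0) *
            ∏ s : Fin T, φ (↑s + 1) (z s.castSucc) (z s.succ) * e (↑s + 1) (z s.succ) := by
  rw [← sum_fiberwise univ (fun z : Fin (T + 1) → Fin K ↦ z (Fin.last T))]
  exact sum_congr rfl fun k _ ↦
    HMM.forward_eq_sum_pathWeight_last pi0 φ e T α hα0 hαrec T le_rfl k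

/-- the total likelihood equals the sum of the final forward
values: `Σ_k α T k = Σ_z W(z)`. -/
theorem stmt_5 (K T : ℕ) (hK : 1 ≤ K) (hT : 1 ≤ T)
    (pi0 : Fin K → ℝ) (φ : ℕ → Fin K → Fin K → ℝ) (e : ℕ → Fin K → ℝ)
    (hπ : ∀ k, 0 ≤ pi0 k)
    (hφ : ∀ t k' k, 0 ≤ φ t k' k)
    (he : ∀ t k, 0 ≤ e t k)
    (α : ℕ → Fin K → ℝ)
    (hα0 : ∀ k, α 0 k = pi0 k)
    (hαrec : ∀ t, 1 ≤ t → t ≤ T → ∀ k : Fin K,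
      α t k = e t k * ∑ k' : Fin K, φ t k' k * α (t - 1) k') :
    ∑ k : Fin K, α T k
      = ∑ z : Fin (T + 1) → Fin K,
          pi0 (z 0) *
            ∏ s : Fin T, φ (↑s + 1) (z s.castSucc) (z s.succ) * e (↑s + 1) (z s.succ) :=
  stmt_5_general K T pi0 φ e α hα0 hαrec
end
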